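/- Let V₁ and V₂ be finite-dimensional complex representations of S_k and S_{n−k} respectively, and let m(V₁⊗V₂) = Ind_{S_k×S_{n−k}}^{S_n}(V₁⊗V₂). Define W^x_{S_m}(ρ) = (1/dim ρ)·Σ_{σ∈S_m} χ_ρ(σ)·x^{l(σ)}, where l(σ) is the number of cycles of σ. Then W^x_{S_n}(m(V₁⊗V₂)) = W^x_{S_k}(V₁)·W^x_{S_{n−k}}(V₂). -/

import Mathlib

/- STATEMENT 6: W^x(Ind_{S_k×S_{n−k}}^{S_n}(V₁⊗V₂)) = W^x_{S_k}(V₁)·W^x_{S_{n−k}}(V₂),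
   where W^x(ρ) = (1/dim ρ)Σ_σ χ_ρ(σ)x^{l(σ)} and the induced character is given by
   the standard induced character formula. -/

attribute [local instance] Classical.propDecidable

/-- `l(σ)`: the number of cycles of `σ`, including fixed points. -/
def cycleCount {α : Type} [Fintype α] [DecidableEq α] (σ : Equiv.Perm α) : ℕ :=
  Fintype.card α - σ.cycleType.sum + Multiset.card σ.cycleType

/-- The standard embedding `S_k × S_m → S_{k+m}`. -/
def permSum (k m : ℕ) : Equiv.Perm (Fin k) × Equiv.Perm (Fin m) →* Equiv.Perm (Fin (k + m)) where
  toFun P := Equiv.permCongr finSumFinEquiv (Equiv.Perm.sumCongrHom (Fin k) (Fin m) P)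
  map_one' := by ext x; simp
  map_mul' A B := by ext x; simp

/-- `W^x_{S_n}(ρ) = (1/dim ρ)·Σ_{σ∈S_n} χ_ρ(σ)·x^{l(σ)}`. -/
noncomputable def Wx (n : ℕ) {V : Type} [AddCommGroup V] [Module ℂ V]
    (ρ : Representation ℂ (Equiv.Perm (Fin n)) V) (x : ℂ) : ℂ :=
  (1 / (Module.finrank ℂ V : ℂ)) *
    ∑ σ : Equiv.Perm (Fin n), LinearMap.trace ℂ V (ρ σ) * x ^ cycleCount σ

/-!
Write the induced character by the induced character formula and exchange the sums: for fixed
`Y` and `(σ, τ)` exactly one `X`, namely `Y⁻¹ (σ, τ) Y`, contributes. Since the cycle count is a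
class function and is additive on `S_k × S_m ⊆ S_{k+m}`, the double sum collapses to
`(k+m)! · (Σ_σ χ₁(σ) x^{l(σ)}) · (Σ_τ χ₂(τ) x^{l(τ)})`, and `(k+m)!` cancels against the
normalisations `1 / (k! m!)` and `dim = C(k+m, m) · dim V₁ · dim V₂`.
-/

open Equiv Finset

namespace Equiv.Perm

variable {α β : Type*} [Fintype α] [DecidableEq α] [Fintype β] [DecidableEq β]

theorem cycleType_permCongr (e : α ≃ β) (g : Perm α) :
    (e.permCongr g).cycleType = g.cycleType := by
  let f : α ≃ {_b : β // True} := e.trans (subtypeUnivEquiv fun _ => trivial).symm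
  have hf : g.extendDomain f = e.permCongr g := by
    ext b
    rw [extendDomain_apply_subtype _ _ trivial]
    simp [f, permCongr_apply]
  rw [← hf, cycleType_extendDomain]

theorem cycleType_sumCongr (σ : Perm α) (τ : Perm β) :
    cycleType (Equiv.sumCongr σ τ) = σ.cycleType + τ.cycleType := by
  have hσ : σ.extendDomain sumIsLeft.symm = Equiv.sumCongr σ (1 : Perm β) := by
    ext (a | b)
    · exact σ.extendDomain_apply_image _ a
    · exact σ.extendDomain_apply_not_subtype _ (by simp)
  have hτ : τ.extendDomain sumIsRight.symm = Equiv.sumCongr (1 : Perm α) τ := by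
    ext (a | b)
    · exact τ.extendDomain_apply_not_subtype _ (by simp)
    · exact τ.extendDomain_apply_image _ b
  have hdisj : Disjoint (Equiv.sumCongr σ (1 : Perm β)) (Equiv.sumCongr (1 : Perm α) τ) := by
    rintro (a | b)
    · exact Or.inr rfl
    · exact Or.inl rfl
  have hmul : Equiv.sumCongr σ (1 : Perm β) * Equiv.sumCongr (1 : Perm α) τ =
      Equiv.sumCongr σ τ := by
    rw [sumCongr_mul, mul_one, one_mul]
  rw [← hmul, hdisj.cycleType_mul, ← hσ, ← hτ, cycleType_extendDomain, cycleType_extendDomain]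

end Equiv.Perm

theorem cycleCount_conj {α : Type} [Fintype α] [DecidableEq α] (g p : Perm α) :
    cycleCount (g * p * g⁻¹) = cycleCount p := by
  simp only [cycleCount, Perm.cycleType_conj]

theorem cycleCount_permSum {k m : ℕ} (σ : Perm (Fin k)) (τ : Perm (Fin m)) :
    cycleCount (permSum k m (σ, τ)) = cycleCount σ + cycleCount τ := by
  have hσ := σ.sum_cycleType_le
  have hτ := τ.sum_cycleType_le
  have h : (permSum k m (σ, τ)).cycleType = σ.cycleType + τ.cycleType :=
    (Perm.cycleType_permCongr _ _).trans (Perm.cycleType_sumCongr σ τ)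
  simp only [cycleCount, h, Multiset.sum_add, Multiset.card_add, Fintype.card_fin] at *
  omega

/-- Frobenius reciprocity against a class function `f`, before dividing by `|H|`. -/
theorem sum_induced_mul_of_conj_invariant {G H R : Type*} [Group G] [Fintype G] [DecidableEq G]
    [Fintype H] [CommSemiring R] (φ : H → G) (χ : H → R) (f : G → R)
    (hf : ∀ g x, f (g * x * g⁻¹) = f x) :
    ∑ X, (∑ Y, ∑ h, if Y * X * Y⁻¹ = φ h then χ h else 0) * f X =
      Fintype.card G * ∑ h, χ h * f (φ h) := by
  have hconj (Y X a : G) : Y * X * Y⁻¹ = a ↔ X = Y⁻¹ * a * Y⁻¹⁻¹ := by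
    constructor <;> rintro rfl <;> group
  calc ∑ X, (∑ Y, ∑ h, if Y * X * Y⁻¹ = φ h then χ h else 0) * f X
      = ∑ Y, ∑ h, ∑ X, if X = Y⁻¹ * φ h * Y⁻¹⁻¹ then χ h * f X else 0 := by
        simp only [sum_mul, ite_mul, zero_mul, hconj]
        rw [sum_comm]
        refine sum_congr rfl fun Y _ => sum_comm
    _ = ∑ _Y : G, ∑ h, χ h * f (φ h) := by
        simp only [sum_ite_eq', mem_univ, if_true, hf]
    _ = Fintype.card G * ∑ h, χ h * f (φ h) := by
        rw [sum_const, card_univ, nsmul_eq_mul]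

theorem stmt6_general (k m : ℕ) (x : ℂ)
    {V₁ V₂ : Type} [AddCommGroup V₁] [Module ℂ V₁]
    [AddCommGroup V₂] [Module ℂ V₂]
    (ρ₁ : Representation ℂ (Equiv.Perm (Fin k)) V₁)
    (ρ₂ : Representation ℂ (Equiv.Perm (Fin m)) V₂) :
    -- `W^x_{S_{k+m}}(m(V₁⊗V₂))`, with the induced character written via the standard
    -- induced character formula, and `dim = ((k+m)!/(k!·m!))·dim V₁·dim V₂` ...
    (1 / (((k + m).factorial / (k.factorial * m.factorial)
          * Module.finrank ℂ V₁ * Module.finrank ℂ V₂ : ℕ) : ℂ)) *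
      ∑ X : Equiv.Perm (Fin (k + m)),
        ((1 / ((k.factorial * m.factorial : ℕ) : ℂ)) *
          ∑ Y : Equiv.Perm (Fin (k + m)), ∑ σ : Equiv.Perm (Fin k), ∑ τ : Equiv.Perm (Fin m),
            if Y * X * Y⁻¹ = permSum k m (σ, τ)
              then LinearMap.trace ℂ V₁ (ρ₁ σ) * LinearMap.trace ℂ V₂ (ρ₂ τ) else 0) *
          x ^ cycleCount X
    -- ... equals `W^x_{S_k}(V₁) · W^x_{S_m}(V₂)`:
    = Wx k ρ₁ x * Wx m ρ₂ x := by
  have key := sum_induced_mul_of_conj_invariant (permSum k m)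
    (fun p => LinearMap.trace ℂ V₁ (ρ₁ p.1) * LinearMap.trace ℂ V₂ (ρ₂ p.2))
    (fun X => x ^ cycleCount X) (fun g p => by rw [cycleCount_conj])
  simp only [Fintype.sum_prod_type, cycleCount_permSum, pow_add, ← mul_mul_mul_comm,
    ← sum_mul_sum, Fintype.card_perm, Fintype.card_fin] at key
  simp only [mul_assoc (1 / _ : ℂ), ← mul_sum, key, Wx]
  generalize Module.finrank ℂ V₁ = d₁, Module.finrank ℂ V₂ = d₂
  rw [← Nat.add_choose, ← Nat.add_choose_mul_factorial_mul_factorial k m]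
  push_cast
  rcases eq_or_ne (d₁ : ℂ) 0 with h₁ | h₁
  · simp [h₁]
  rcases eq_or_ne (d₂ : ℂ) 0 with h₂ | h₂
  · simp [h₂]
  have hC : ((k + m).choose m : ℂ) ≠ 0 := by exact_mod_cast (Nat.choose_pos (by omega)).ne'
  have hk : (k.factorial : ℂ) ≠ 0 := by exact_mod_cast k.factorial_ne_zero
  have hm : (m.factorial : ℂ) ≠ 0 := by exact_mod_cast m.factorial_ne_zero
  field_simp

theorem stmt6 (k m : ℕ) (x : ℂ)
    {V₁ V₂ : Type} [AddCommGroup V₁] [Module ℂ V₁] [FiniteDimensional ℂ V₁]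
    [AddCommGroup V₂] [Module ℂ V₂] [FiniteDimensional ℂ V₂]
    (ρ₁ : Representation ℂ (Equiv.Perm (Fin k)) V₁)
    (ρ₂ : Representation ℂ (Equiv.Perm (Fin m)) V₂) :
    -- `W^x_{S_{k+m}}(m(V₁⊗V₂))`, with the induced character written via the standard
    -- induced character formula, and `dim = ((k+m)!/(k!·m!))·dim V₁·dim V₂` ...
    (1 / (((k + m).factorial / (k.factorial * m.factorial)
          * Module.finrank ℂ V₁ * Module.finrank ℂ V₂ : ℕ) : ℂ)) *
      ∑ X : Equiv.Perm (Fin (k + m)),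
        ((1 / ((k.factorial * m.factorial : ℕ) : ℂ)) *
          ∑ Y : Equiv.Perm (Fin (k + m)), ∑ σ : Equiv.Perm (Fin k), ∑ τ : Equiv.Perm (Fin m),
            if Y * X * Y⁻¹ = permSum k m (σ, τ)
              then LinearMap.trace ℂ V₁ (ρ₁ σ) * LinearMap.trace ℂ V₂ (ρ₂ τ) else 0) *
          x ^ cycleCount X
    -- ... equals `W^x_{S_k}(V₁) · W^x_{S_m}(V₂)`:
    = Wx k ρ₁ x * Wx m ρ₂ x :=
  stmt6_general k m x ρ₁ ρ₂
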